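/- Let G be a connected finite simple graph with a vertex u, and let w₁, w₂ ∈ V(G) \ N[u] with N(w₂) \ {w₁} ⊆ N(u). If N(w₁) = {w₂} and d(u) ≥ d(w₂) + 1, then q(G − w₁w₂ + uw₁) > q(G). -/

import Mathlib

open scoped Classical

namespace OuterplanarQ

/-- Signless Laplacian matrix Q(G) = D(G) + A(G). -/
noncomputable def qMatrix {V : Type*} [Fintype V] (G : SimpleGraph V) : Matrix V V ℝ :=
  fun i j => (if i = j then (G.degree i : ℝ) else 0) + (if G.Adj i j then 1 else 0)

/-- The Q-index: the largest eigenvalue of Q(G). -/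
noncomputable def qIndex {V : Type*} [Fintype V] (G : SimpleGraph V) : ℝ :=
  sSup {μ : ℝ | ∃ x : V → ℝ, x ≠ 0 ∧ (qMatrix G).mulVec x = μ • x}

/-- Outerplanar: one-page book embedding characterization, i.e. the vertices admit a
linear ordering (injection into ℝ) such that no two edges interleave. -/
def IsOuterplanar {V : Type*} (G : SimpleGraph V) : Prop :=
  ∃ f : V → ℝ, Function.Injective f ∧
    ∀ a b c d : V, G.Adj a b → G.Adj c d →
      ¬ (f a < f c ∧ f c < f b ∧ f b < f d)

/-- `G` contains a copy of `F` as a subgraph. -/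
def ContainsCopy {α β : Type*} (G : SimpleGraph α) (F : SimpleGraph β) : Prop :=
  ∃ f : β → α, Function.Injective f ∧ ∀ a b : β, F.Adj a b → G.Adj (f a) (f b)

/-- Disjoint union of `t` copies of the path on `k` vertices. -/
def pathUnion (t k : ℕ) : SimpleGraph (Fin t × Fin k) where
  Adj a b := a.1 = b.1 ∧ (SimpleGraph.pathGraph k).Adj a.2 b.2
  symm := ⟨fun _ _ h => ⟨h.1.symm, h.2.symm⟩⟩
  loopless := ⟨fun _ h => (SimpleGraph.pathGraph k).irrefl h.2⟩

/-- Disjoint union of two graphs. -/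
def disjSum {α β : Type*} (G : SimpleGraph α) (H : SimpleGraph β) : SimpleGraph (α ⊕ β) where
  Adj a b := match a, b with
    | Sum.inl x, Sum.inl y => G.Adj x y
    | Sum.inr x, Sum.inr y => H.Adj x y
    | _, _ => False
  symm := ⟨by rintro (x|x) (y|y) h <;> simp_all <;> exact h.symm⟩
  loopless := ⟨by rintro (x|x) h <;> simp_all⟩

/-- The join `K₁ ∨ H` of a single vertex with `H`. -/
def cone {V : Type*} (H : SimpleGraph V) : SimpleGraph (Option V) where
  Adj a b := match a, b with
    | none, none => False
    | none, some _ => True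
    | some _, none => True
    | some x, some y => H.Adj x y
  symm := ⟨by rintro (_|x) (_|y) h <;> simp_all <;> exact h.symm⟩
  loopless := ⟨by rintro (_|x) h <;> simp_all⟩

/-- A disjoint union of paths: acyclic with maximum degree at most 2. -/
def IsLinearForest {V : Type*} [Fintype V] (G : SimpleGraph V) : Prop :=
  G.IsAcyclic ∧ ∀ v : V, G.degree v ≤ 2

/-- The closed neighbourhood `N[u]`. -/
def closedNbhd {V : Type*} (G : SimpleGraph V) (u : V) : Set V :=
  insert u (G.neighborSet u)

/-- The graph obtained from `G` by adding the edge `uv`. -/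
def addEdge {V : Type*} (G : SimpleGraph V) (u v : V) : SimpleGraph V :=
  G ⊔ SimpleGraph.fromEdgeSet {s(u, v)}

/-- The graph obtained from `G` by deleting the edge `uv`. -/
def delEdge {V : Type*} (G : SimpleGraph V) (u v : V) : SimpleGraph V :=
  G.deleteEdges {s(u, v)}

/-- η(u) = d(u) + (1/d(u)) · Σ_{v ∈ N(u)} d(v). -/
noncomputable def eta {V : Type*} [Fintype V] (G : SimpleGraph V) (u : V) : ℝ :=
  (G.degree u : ℝ) + (1 / (G.degree u : ℝ)) * ∑ v ∈ G.neighborFinset u, (G.degree v : ℝ)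

end OuterplanarQ

/-! The signless Laplacian is `Q = N Nᵀ` for the vertex–edge incidence matrix `N`, so
`xᵀ Q x = ∑_{ab ∈ E} (x a + x b)²`, and the rotation changes this form by
`(x u + x w₁)² - (x w₁ + x w₂)²`. Evaluated at the positive Perron vector `x` of `G` this change is
positive as soon as `x w₂ < x u`, and then `q(G') ≥ xᵀ Q(G') x / xᵀ x > q(G)`. The inequality
`x w₂ < x u` comes from the eigen-equations at `u`, `w₁`, `w₂` together with `q(G) > d(u)`. -/

namespace Matrix

variable {n : Type*} [Fintype n] {M : Matrix n n ℝ}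

theorem IsHermitian.exists_eigenvector_rayleigh_max [Nonempty n] (hM : M.IsHermitian) :
    ∃ μ : ℝ, (∃ v : n → ℝ, v ≠ 0 ∧ M *ᵥ v = μ • v) ∧
      ∀ y : n → ℝ, y ⬝ᵥ M *ᵥ y ≤ μ * (y ⬝ᵥ y) := by
  classical
  let T := (toEuclideanLin M).toContinuousLinearMap
  have hT : (T : EuclideanSpace ℝ n →ₗ[ℝ] EuclideanSpace ℝ n).IsSymmetric :=
    isSymmetric_toEuclideanLin_iff.mpr hM
  have hquad (y : EuclideanSpace ℝ n) : T.reApplyInnerSelf y = y.ofLp ⬝ᵥ M *ᵥ y.ofLp := by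
    simp [T, ContinuousLinearMap.reApplyInnerSelf, EuclideanSpace.inner_eq_star_dotProduct]
  have hnorm (y : EuclideanSpace ℝ n) : ‖y‖ ^ 2 = y.ofLp ⬝ᵥ y.ofLp := by
    rw [← real_inner_self_eq_norm_sq, EuclideanSpace.inner_eq_star_dotProduct]
    simp
  have hbdd :
      BddAbove (Set.range fun y : {y : EuclideanSpace ℝ n // y ≠ 0} => T.rayleighQuotient y) :=
    ⟨‖T‖, by rintro _ ⟨y, rfl⟩; exact (le_abs_self _).trans (T.rayleighQuotient_le_norm y)⟩
  obtain ⟨v, hv⟩ := hT.hasEigenvalue_iSup_of_finiteDimensional.exists_hasEigenvector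
  refine ⟨⨆ y : {y : EuclideanSpace ℝ n // y ≠ 0}, T.rayleighQuotient y, ⟨v.ofLp, ?_, ?_⟩,
    fun y => ?_⟩
  · simpa using hv.2
  · simpa [T, ContinuousLinearMap.rayleighQuotient, ContinuousLinearMap.reApplyInnerSelf]
      using congrArg WithLp.ofLp hv.apply_eq_smul
  · rcases eq_or_ne y 0 with rfl | hy
    · simp
    have hy' : WithLp.toLp 2 y ≠ 0 := by simpa using hy
    have := le_ciSup hbdd ⟨_, hy'⟩
    have hpos : 0 < ‖WithLp.toLp 2 y‖ ^ 2 := by positivity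
    rw [ContinuousLinearMap.rayleighQuotient, div_le_iff₀ hpos, hquad, hnorm] at this
    exact this

theorem IsHermitian.mulVec_eq_smul_of_rayleigh_eq (hM : M.IsHermitian) {μ : ℝ}
    (hray : ∀ y : n → ℝ, y ⬝ᵥ M *ᵥ y ≤ μ * (y ⬝ᵥ y)) {x : n → ℝ}
    (hx : μ * (x ⬝ᵥ x) ≤ x ⬝ᵥ M *ᵥ x) : M *ᵥ x = μ • x := by
  classical
  have hP : (μ • (1 : Matrix n n ℝ) - M).PosSemidef := by
    refine .of_dotProduct_mulVec_nonneg ((isHermitian_one.smul (IsSelfAdjoint.all μ)).sub hM)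
      fun y => ?_
    simpa [sub_mulVec, smul_mulVec, dotProduct_sub, dotProduct_smul] using hray y
  have hPx : (μ • (1 : Matrix n n ℝ) - M) *ᵥ x = 0 := by
    refine (hP.dotProduct_mulVec_zero_iff x).mp (le_antisymm ?_ (hP.dotProduct_mulVec_nonneg x))
    simpa [sub_mulVec, smul_mulVec, dotProduct_sub, dotProduct_smul] using hx
  rw [sub_mulVec, sub_eq_zero] at hPx
  simpa [smul_mulVec] using hPx.symm

theorem IsHermitian.exists_nonneg_eigenvector_rayleigh_max [Nonempty n] (hM : M.IsHermitian)
    (h0 : ∀ i j, 0 ≤ M i j) :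
    ∃ μ : ℝ, (∃ x : n → ℝ, 0 ≤ x ∧ x ≠ 0 ∧ M *ᵥ x = μ • x) ∧
      ∀ y : n → ℝ, y ⬝ᵥ M *ᵥ y ≤ μ * (y ⬝ᵥ y) := by
  obtain ⟨μ, ⟨v, hv0, hv⟩, hray⟩ := hM.exists_eigenvector_rayleigh_max
  have habs : v ⬝ᵥ M *ᵥ v ≤ |v| ⬝ᵥ M *ᵥ |v| := by
    simp only [dotProduct, mulVec, Finset.mul_sum]
    refine Finset.sum_le_sum fun i _ => Finset.sum_le_sum fun j _ => ?_
    calc v i * (M i j * v j) ≤ |v i * (M i j * v j)| := le_abs_self _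
      _ = |v| i * (M i j * |v| j) := by simp [abs_mul, abs_of_nonneg (h0 i j)]
  refine ⟨μ, ⟨|v|, abs_nonneg v, by simpa using hv0, hM.mulVec_eq_smul_of_rayleigh_eq hray ?_⟩,
    hray⟩
  calc μ * (|v| ⬝ᵥ |v|) = v ⬝ᵥ M *ᵥ v := by
        rw [hv, dotProduct_smul, smul_eq_mul]
        simp [dotProduct, abs_mul_abs_self]
    _ ≤ |v| ⬝ᵥ M *ᵥ |v| := habs

theorem sSup_eigenvalues_eq {μ : ℝ} (hμ : ∃ v : n → ℝ, v ≠ 0 ∧ M *ᵥ v = μ • v)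
    (hray : ∀ y : n → ℝ, y ⬝ᵥ M *ᵥ y ≤ μ * (y ⬝ᵥ y)) :
    sSup {ν : ℝ | ∃ v : n → ℝ, v ≠ 0 ∧ M *ᵥ v = ν • v} = μ := by
  refine IsGreatest.csSup_eq ⟨hμ, ?_⟩
  rintro ν ⟨v, hv0, hv⟩
  have hpos : 0 < v ⬝ᵥ v := by simpa using dotProduct_star_self_pos_iff.mpr hv0
  have := hray v
  rw [hv, dotProduct_smul, smul_eq_mul] at this
  exact le_of_mul_le_mul_right this hpos

end Matrix

namespace OuterplanarQ

section

open Matrix SimpleGraph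

variable {V : Type*}

def edgeSumSq (x : V → ℝ) : Sym2 V → ℝ :=
  Sym2.lift ⟨fun a b => (x a + x b) ^ 2, fun a b => by simp only [add_comm]⟩

@[simp]
lemma edgeSumSq_mk (x : V → ℝ) (a b : V) : edgeSumSq x s(a, b) = (x a + x b) ^ 2 := rfl

variable [Fintype V]

lemma qMatrix_eq_incMatrix_mul_transpose (G : SimpleGraph V) :
    qMatrix G = G.incMatrix ℝ * (G.incMatrix ℝ)ᵀ := by
  rw [incMatrix_mul_transpose]
  ext i j
  by_cases h : i = j
  · subst h
    simp [qMatrix]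
  · simp [qMatrix, h]

lemma transpose_incMatrix_mulVec_of_adj (G : SimpleGraph V) (x : V → ℝ) {a b : V}
    (h : G.Adj a b) :
    ((G.incMatrix ℝ)ᵀ *ᵥ x) s(a, b) = x a + x b := by
  simp only [mulVec, dotProduct, transpose_apply, incMatrix_apply', mk'_mem_incidenceSet_iff, h,
    true_and, ite_mul, one_mul, zero_mul]
  rw [Finset.sum_ite, Finset.filter_or, Finset.sum_union]
  · simp only [Finset.sum_filter]
    simp
  · simp [Finset.disjoint_left, h.ne]

lemma transpose_incMatrix_mulVec_of_notMem (G : SimpleGraph V) (x : V → ℝ) {e : Sym2 V}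
    (he : e ∉ G.edgeSet) : ((G.incMatrix ℝ)ᵀ *ᵥ x) e = 0 := by
  have h0 (i : V) : G.incMatrix ℝ i e = 0 := G.incMatrix_of_notMem_incidenceSet fun h => he h.1
  simp [mulVec, dotProduct, h0]

lemma dotProduct_qMatrix_mulVec (G : SimpleGraph V) (x : V → ℝ) :
    x ⬝ᵥ qMatrix G *ᵥ x = ∑ e ∈ G.edgeFinset, edgeSumSq x e := by
  rw [qMatrix_eq_incMatrix_mul_transpose, ← mulVec_mulVec, dotProduct_mulVec, ← mulVec_transpose]
  rw [dotProduct, ← Finset.sum_subset (Finset.subset_univ G.edgeFinset)]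
  · refine Finset.sum_congr rfl fun e he => ?_
    induction e using Sym2.ind with
    | h a b =>
      rw [transpose_incMatrix_mulVec_of_adj G x (G.mem_edgeFinset.mp he), edgeSumSq_mk, sq]
  · intro e _ he
    rw [transpose_incMatrix_mulVec_of_notMem G x (by simpa using he), mul_zero]

lemma dotProduct_qMatrix_addEdge_mulVec {G : SimpleGraph V} {a b : V} (hab : a ≠ b)
    (h : ¬G.Adj a b) (x : V → ℝ) :
    x ⬝ᵥ qMatrix (addEdge G a b) *ᵥ x = x ⬝ᵥ qMatrix G *ᵥ x + (x a + x b) ^ 2 := by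
  have hE : (addEdge G a b).edgeFinset = insert s(a, b) G.edgeFinset := by
    rw [← Finset.coe_inj, Finset.coe_insert, coe_edgeFinset, coe_edgeFinset, addEdge, ← edge,
      edgeSet_sup, edgeSet_edge_of_ne hab, Set.union_singleton]
  rw [dotProduct_qMatrix_mulVec, dotProduct_qMatrix_mulVec, hE, Finset.sum_insert (by simpa),
    edgeSumSq_mk, add_comm]

lemma dotProduct_qMatrix_delEdge_mulVec {G : SimpleGraph V} {a b : V} (h : G.Adj a b) (x : V → ℝ) :
    x ⬝ᵥ qMatrix (delEdge G a b) *ᵥ x = x ⬝ᵥ qMatrix G *ᵥ x - (x a + x b) ^ 2 := by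
  simp only [dotProduct_qMatrix_mulVec, delEdge]
  rw [← Finset.coe_singleton, edgeFinset_deleteEdges, Finset.sdiff_singleton_eq_erase,
    Finset.sum_erase_eq_sub (G.mem_edgeFinset.mpr h), edgeSumSq_mk]

lemma qMatrix_isHermitian (G : SimpleGraph V) : (qMatrix G).IsHermitian := by
  rw [qMatrix_eq_incMatrix_mul_transpose, ← conjTranspose_eq_transpose_of_trivial]
  exact isHermitian_mul_conjTranspose_self _

lemma qMatrix_nonneg (G : SimpleGraph V) (i j : V) : 0 ≤ qMatrix G i j := by
  unfold qMatrix
  positivity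

lemma qMatrix_mulVec_apply (G : SimpleGraph V) (x : V → ℝ) (i : V) :
    (qMatrix G *ᵥ x) i = G.degree i * x i + ∑ j ∈ G.neighborFinset i, x j := by
  simp only [qMatrix, mulVec, dotProduct, add_mul, Finset.sum_add_distrib, ite_mul, zero_mul,
    one_mul, Finset.sum_ite_eq, Finset.mem_univ, if_true, ← Finset.sum_filter,
    neighborFinset_eq_filter]

lemma qIndex_spec [Nonempty V] (G : SimpleGraph V) :
    (∃ x : V → ℝ, 0 ≤ x ∧ x ≠ 0 ∧ qMatrix G *ᵥ x = qIndex G • x) ∧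
      ∀ y : V → ℝ, y ⬝ᵥ qMatrix G *ᵥ y ≤ qIndex G * (y ⬝ᵥ y) := by
  obtain ⟨μ, ⟨x, hx0, hx, hxμ⟩, hray⟩ :=
    (qMatrix_isHermitian G).exists_nonneg_eigenvector_rayleigh_max (qMatrix_nonneg G)
  rw [show qIndex G = μ from sSup_eigenvalues_eq ⟨x, hx, hxμ⟩ hray]
  exact ⟨⟨x, hx0, hx, hxμ⟩, hray⟩

lemma dotProduct_qMatrix_mulVec_le_qIndex (G : SimpleGraph V) (y : V → ℝ) :
    y ⬝ᵥ qMatrix G *ᵥ y ≤ qIndex G * (y ⬝ᵥ y) := by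
  cases isEmpty_or_nonempty V
  · simp [dotProduct]
  · exact (qIndex_spec G).2 y

lemma pos_of_qMatrix_mulVec_eq_smul {G : SimpleGraph V} (hG : G.Connected) {x : V → ℝ} {μ : ℝ}
    (hx0 : 0 ≤ x) (hx : x ≠ 0) (hxμ : qMatrix G *ᵥ x = μ • x) (i : V) : 0 < x i := by
  have hzero {a b : V} (hab : G.Adj a b) (ha : x a = 0) : x b = 0 := by
    have h := congrFun hxμ a
    rw [qMatrix_mulVec_apply, Pi.smul_apply, ha, smul_zero, mul_zero, zero_add,
      Finset.sum_eq_zero_iff_of_nonneg fun j _ => hx0 j] at h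
    exact h b (G.mem_neighborFinset a b |>.mpr hab)
  refine (hx0 i).lt_of_ne' fun hi => hx (funext fun j => ?_)
  obtain ⟨p⟩ := hG.preconnected i j
  induction p with
  | nil => exact hi
  | cons hab _ ih => exact ih (hzero hab hi)

lemma exists_pos_eigenvector_qIndex {G : SimpleGraph V} (hG : G.Connected) :
    ∃ x : V → ℝ, (∀ i, 0 < x i) ∧ qMatrix G *ᵥ x = qIndex G • x := by
  have := hG.nonempty
  obtain ⟨x, hx0, hx, hxq⟩ := (qIndex_spec G).1
  exact ⟨x, pos_of_qMatrix_mulVec_eq_smul hG hx0 hx hxq, hxq⟩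

theorem degree_lt_qIndex {G : SimpleGraph V} {u : V} (hu : 0 < G.degree u) :
    (G.degree u : ℝ) < qIndex G := by
  obtain ⟨v, huv⟩ := G.degree_pos_iff_exists_adj u |>.mp hu
  set y : V → ℝ := Pi.single u 1
  have hQy : qMatrix G *ᵥ y = fun i => qMatrix G i u := by
    ext i; simp [y]
  have hyQy : y ⬝ᵥ qMatrix G *ᵥ y = G.degree u := by
    simp [hQy, y, single_dotProduct, qMatrix]
  have hyy : y ⬝ᵥ y = 1 := by simp [y]
  have hle := dotProduct_qMatrix_mulVec_le_qIndex G y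
  rw [hyQy, hyy, mul_one] at hle
  refine hle.lt_of_ne fun hq => ?_
  have hQy' := (qMatrix_isHermitian G).mulVec_eq_smul_of_rayleigh_eq
    (dotProduct_qMatrix_mulVec_le_qIndex G) (x := y) (by rw [hyQy, hyy, ← hq, mul_one])
  have := congrFun hQy' v
  simp [hQy, y, qMatrix, huv.symm, huv.ne'] at this

theorem eigenvector_apply_lt_of_pendant_path {G : SimpleGraph V} {x : V → ℝ} {μ : ℝ}
    {u w₁ w₂ : V}
    (hx : ∀ i, 0 < x i) (hxμ : qMatrix G *ᵥ x = μ • x) (hμ : (G.degree u : ℝ) < μ)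
    (hsub : G.neighborSet w₂ \ {w₁} ⊆ G.neighborSet u) (hN : G.neighborSet w₁ = {w₂})
    (hdeg : G.degree w₂ + 1 ≤ G.degree u) : x w₂ < x u := by
  have row (i : V) : G.degree i * x i + ∑ j ∈ G.neighborFinset i, x j = μ * x i := by
    simpa [qMatrix_mulVec_apply] using congrFun hxμ i
  have hN₁ : G.neighborFinset w₁ = {w₂} := by
    ext a
    rw [mem_neighborFinset, ← mem_neighborSet, hN, Set.mem_singleton_iff, Finset.mem_singleton]
  have hw₁ : x w₁ + x w₂ = μ * x w₁ := by
    simpa [← card_neighborFinset_eq_degree, hN₁] using row w₁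
  have hw₁w₂ : w₁ ∈ G.neighborFinset w₂ := by
    rw [mem_neighborFinset, G.adj_comm, ← mem_neighborFinset, hN₁, Finset.mem_singleton]
  have hd₂ : 1 ≤ G.degree w₂ :=
    G.degree_pos_iff_exists_adj w₂ |>.mpr ⟨w₁, by simpa using hw₁w₂⟩
  have hsum : ∑ j ∈ G.neighborFinset w₂, x j ≤ x w₁ + ∑ j ∈ G.neighborFinset u, x j := by
    rw [← Finset.add_sum_erase _ _ hw₁w₂]
    refine add_le_add le_rfl (Finset.sum_le_sum_of_subset_of_nonneg (fun j hj => ?_)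
      fun j _ _ => (hx j).le)
    simpa using hsub (by simpa [and_comm] using hj)
  have hdeg' : (G.degree w₂ : ℝ) + 1 ≤ G.degree u := by exact_mod_cast hdeg
  have hd₂' : (1 : ℝ) ≤ G.degree w₂ := by exact_mod_cast hd₂
  -- If `x u ≤ x w₂`, the equations at `u` and `w₂` force `(d(u) - d(w₂)) x w₂ ≤ x w₁`,
  -- whereas the one at `w₁` gives `x w₂ = (μ - 1) x w₁ > x w₁`.
  by_contra! h
  nlinarith [row u, row w₂, hx w₁, hx w₂, mul_le_mul_of_nonneg_left h (sub_nonneg.mpr hμ.le),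
    mul_nonneg (sub_nonneg.mpr hdeg') (hx w₂).le]

lemma dotProduct_qMatrix_rotate_mulVec {G : SimpleGraph V} {u w₁ w₂ : V} (hadj : G.Adj w₁ w₂)
    (hu₁ : u ≠ w₁) (hnadj : ¬G.Adj u w₁) (x : V → ℝ) :
    x ⬝ᵥ qMatrix (addEdge (delEdge G w₁ w₂) u w₁) *ᵥ x
      = x ⬝ᵥ qMatrix G *ᵥ x + (x u + x w₁) ^ 2 - (x w₁ + x w₂) ^ 2 := by
  rw [dotProduct_qMatrix_addEdge_mulVec (G := delEdge G w₁ w₂) hu₁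
      (fun h => hnadj (G.deleteEdges_le _ h)), dotProduct_qMatrix_delEdge_mulVec hadj]
  ring

lemma qIndex_lt_of_dotProduct_lt {G H : SimpleGraph V} {x : V → ℝ} (hx : x ≠ 0)
    (hxq : qMatrix G *ᵥ x = qIndex G • x) (h : x ⬝ᵥ qMatrix G *ᵥ x < x ⬝ᵥ qMatrix H *ᵥ x) :
    qIndex G < qIndex H := by
  have hxx : 0 < x ⬝ᵥ x := by simpa using dotProduct_star_self_pos_iff.mpr hx
  rw [hxq, dotProduct_smul, smul_eq_mul] at h
  exact lt_of_mul_lt_mul_right (h.trans_le (dotProduct_qMatrix_mulVec_le_qIndex H x)) hxx.le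

end

theorem qIndex_lt_rotate_pendant_path_general
    {V : Type*} [Fintype V] (G : SimpleGraph V) (hconn : G.Connected)
    (u w₁ w₂ : V) (hw₁ : w₁ ∉ closedNbhd G u)
    (hsub : G.neighborSet w₂ \ {w₁} ⊆ G.neighborSet u)
    (hN : G.neighborSet w₁ = {w₂})
    (hdeg : G.degree w₂ + 1 ≤ G.degree u) :
    qIndex G < qIndex (addEdge (delEdge G w₁ w₂) u w₁) := by
  obtain ⟨hu₁, hnadj⟩ : u ≠ w₁ ∧ ¬G.Adj u w₁ := by
    simpa [closedNbhd, eq_comm] using hw₁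
  have hadj : G.Adj w₁ w₂ := by simp [← SimpleGraph.mem_neighborSet, hN]
  obtain ⟨x, hx, hxq⟩ := exists_pos_eigenvector_qIndex hconn
  have hlt : x w₂ < x u :=
    eigenvector_apply_lt_of_pendant_path hx hxq (degree_lt_qIndex (by omega)) hsub hN hdeg
  refine qIndex_lt_of_dotProduct_lt (fun h => (hx u).ne' (by simp [h])) hxq ?_
  rw [dotProduct_qMatrix_rotate_mulVec hadj hu₁ hnadj]
  nlinarith [mul_pos (sub_pos.mpr hlt) (add_pos (add_pos (hx u) (hx w₂)) (hx w₁)),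
    mul_pos (sub_pos.mpr hlt) (hx w₁)]

/-- Lemma 2.7 of the paper: if `w₁, w₂ ∉ N[u]`, `N(w₂) \ {w₁} ⊆ N(u)`, `N(w₁) = {w₂}`
and `d(u) ≥ d(w₂) + 1`, then `q(G - w₁w₂ + uw₁) > q(G)`. -/
theorem qIndex_lt_rotate_pendant_path
    {V : Type*} [Fintype V] (G : SimpleGraph V) (hconn : G.Connected)
    (u w₁ w₂ : V) (hw₁ : w₁ ∉ closedNbhd G u) (hw₂ : w₂ ∉ closedNbhd G u)
    (hsub : G.neighborSet w₂ \ {w₁} ⊆ G.neighborSet u)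
    (hN : G.neighborSet w₁ = {w₂})
    (hdeg : G.degree w₂ + 1 ≤ G.degree u) :
    qIndex G < qIndex (addEdge (delEdge G w₁ w₂) u w₁) :=
  qIndex_lt_rotate_pendant_path_general G hconn u w₁ w₂ hw₁ hsub hN hdeg

end OuterplanarQ
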